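/- Let d ≥ 1 and μ > 0. Then the sum over p ∈ ℕ₀^d of min(π²|p|² − μ, 0) is bounded below by −L_d^cl μ^(1+d/2) − C ∑_{k=0}^{d−1} μ^(1+k/2), where C depends only on d and L_k^cl are the semiclassical constants. -/

import Mathlib

open MeasureTheory

/-- Volume of the unit ball in `ℝ^k`. -/
noncomputable def unitBallVol (k : ℕ) : ℝ :=
  (volume (Metric.ball (0 : EuclideanSpace ℝ (Fin k)) 1)).toReal

/-- The semiclassical kinetic-energy constant `K_k^cl` (spin number `q = 1`). -/
noncomputable def Kcl (k : ℕ) : ℝ :=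
  ((k : ℝ) / (k + 2)) * (4 * Real.pi ^ 2) / (unitBallVol k) ^ ((2 : ℝ) / k)

/-- The semiclassical eigenvalue-sum constant `L_k^cl`. -/
noncomputable def Lcl (k : ℕ) : ℝ :=
  (1 + (k : ℝ) / 2)⁻¹ * ((1 + (2 : ℝ) / k) * Kcl k) ^ (-(k : ℝ) / 2)

/-!
Let `S_d(μ) = ∑_{p ∈ ℕ^d} min (π² |p|² - μ, 0)`. Splitting off the first coordinate `n` of `p`
gives `S_{d+1}(μ) = ∑_n S_d(μ - π² n²)`, so the bound follows by induction on `d` once the weights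
`(ν)₊^(1 + k/2)` of the lower-dimensional bound are summed over `n`. Since
`t ↦ (μ - π² t²)₊^(1 + k/2)` decreases on `[0, ∞)`, that sum is at most its `n = 0` term plus the
integral over `[0, ∞)`, and the substitution `t = (√μ / π) sin θ` evaluates the integral to
`(∫₀^{π/2} cos^{k+3}) / π · μ^(1 + (k+1)/2)`. Expressing these Wallis integrals and the unit-ball
volumes through the Gamma function gives `L_{k+1}^cl = L_k^cl · (∫₀^{π/2} cos^{k+3}) / π`: the
main term of dimension `d` sums exactly to that of dimension `d + 1`, and every other term is of
lower order.
-/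

open Real

lemma unitBallVol_eq {k : ℕ} (hk : k ≠ 0) :
    unitBallVol k = √π ^ k / Gamma (k / 2 + 1) := by
  have : Nonempty (Fin k) := ⟨⟨0, Nat.pos_of_ne_zero hk⟩⟩
  rw [unitBallVol, EuclideanSpace.volume_ball, Fintype.card_fin, ENNReal.toReal_mul,
    ENNReal.toReal_pow, ENNReal.toReal_ofReal zero_le_one, one_pow, one_mul,
    ENNReal.toReal_ofReal (by positivity)]

lemma Lcl_eq (k : ℕ) : Lcl k = 2 / (k + 2) * (√π ^ k / Gamma (k / 2 + 1)) / (2 * π) ^ k := by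
  rcases eq_or_ne k 0 with rfl | hk
  -- the junk values `2 / 0 = 0` do not matter at `k = 0`: they sit under a power `^ 0`
  · simp [Lcl, Kcl]
  have hω : 0 < unitBallVol k := by rw [unitBallVol_eq hk]; positivity
  have hK : (1 + 2 / (k : ℝ)) * Kcl k = (2 * π) ^ (2 : ℝ) / unitBallVol k ^ ((2 : ℝ) / k) := by
    rw [Kcl, rpow_two]
    field_simp
    ring
  rw [Lcl, hK, div_rpow (by positivity) (by positivity), ← rpow_mul (by positivity),
    ← rpow_mul hω.le, show (2 : ℝ) * (-k / 2) = -k by ring,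
    show 2 / (k : ℝ) * (-k / 2) = -1 by field_simp, rpow_neg (by positivity), rpow_neg_one,
    rpow_natCast, ← unitBallVol_eq hk]
  field_simp
  ring

lemma Lcl_nonneg (k : ℕ) : 0 ≤ Lcl k := by
  rw [Lcl_eq]
  positivity

lemma integral_cos_pow_eq_Gamma (n : ℕ) :
    ∫ x in 0..π / 2, cos x ^ n = √π * Gamma ((n + 1) / 2) / (2 * Gamma (n / 2 + 1)) := by
  induction n using Nat.twoStepInduction with
  | zero =>
    norm_num [Gamma_one_half_eq, mul_self_sqrt pi_pos.le]
  | one =>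
    rw [show ((1 : ℕ) + 1 : ℝ) / 2 = 1 by norm_num,
      show ((1 : ℕ) : ℝ) / 2 + 1 = 1 / 2 + 1 by norm_num, Gamma_add_one (by norm_num),
      Gamma_one_half_eq, Gamma_one]
    field_simp
    simp
  | more n ih _ =>
    have h1 : ((n + 2 : ℕ) + 1 : ℝ) / 2 = (n + 1) / 2 + 1 := by push_cast; ring
    have h2 : ((n + 2 : ℕ) : ℝ) / 2 + 1 = (n / 2 + 1) + 1 := by push_cast; ring
    rw [integral_cos_pow, ih, h1, h2, Gamma_add_one (s := (n + 1) / 2) (by positivity),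
      Gamma_add_one (s := n / 2 + 1) (by positivity)]
    have := Gamma_pos_of_pos (by positivity : (0 : ℝ) < n / 2 + 1)
    generalize Gamma (n / 2 + 1) = b at *
    simp only [cos_pi_div_two, sin_zero, ne_eq, Nat.add_eq_zero_iff, one_ne_zero, and_false,
      not_false_eq_true, zero_pow, zero_mul, mul_zero, sub_zero, zero_div, zero_add]
    field_simp

lemma integral_cos_pow_le (n : ℕ) : ∫ x in 0..π / 2, cos x ^ n ≤ π / 2 := by
  calc ∫ x in 0..π / 2, cos x ^ n ≤ ∫ _ in 0..π / 2, (1 : ℝ) := by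
        refine intervalIntegral.integral_mono_on (by positivity)
          ((continuous_cos.pow n).intervalIntegrable _ _) (by simp) fun x hx => ?_
        exact pow_le_one₀ (cos_nonneg_of_mem_Icc ⟨by linarith [hx.1, pi_pos], hx.2⟩) (cos_le_one x)
    _ = π / 2 := by simp

lemma Lcl_succ (k : ℕ) : Lcl (k + 1) = Lcl k * (∫ x in 0..π / 2, cos x ^ (k + 3)) / π := by
  rw [Lcl_eq, Lcl_eq, integral_cos_pow_eq_Gamma]
  have h1 : ((k + 3 : ℕ) + 1 : ℝ) / 2 = (k / 2 + 1) + 1 := by push_cast; ring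
  have h2 : ((k + 3 : ℕ) : ℝ) / 2 + 1 = ((k + 1 : ℕ) / 2 + 1) + 1 := by push_cast; ring
  rw [h1, h2, Gamma_add_one (s := k / 2 + 1) (by positivity),
    Gamma_add_one (s := (k + 1 : ℕ) / 2 + 1) (by positivity)]
  have := Gamma_pos_of_pos (by positivity : (0:ℝ) < k / 2 + 1)
  have := Gamma_pos_of_pos (by positivity : (0:ℝ) < (k + 1 : ℕ) / 2 + 1)
  generalize Gamma (k / 2 + 1) = a at *
  generalize Gamma ((k + 1 : ℕ) / 2 + 1) = b at *
  push_cast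
  field_simp
  ring

noncomputable def posPow (k : ℕ) (ν : ℝ) : ℝ := max ν 0 ^ (1 + (k : ℝ) / 2)

section posPow

variable (k : ℕ) {ν : ℝ}

lemma posPow_of_nonpos (h : ν ≤ 0) : posPow k ν = 0 := by
  rw [posPow, max_eq_right h, zero_rpow (by positivity)]

lemma posPow_of_nonneg (h : 0 ≤ ν) : posPow k ν = ν ^ (1 + (k : ℝ) / 2) := by
  rw [posPow, max_eq_left h]

lemma posPow_nonneg : 0 ≤ posPow k ν := rpow_nonneg (le_max_right _ _) _

lemma monotone_posPow : Monotone (posPow k) := fun _ _ h =>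
  rpow_le_rpow (le_max_right _ _) (max_le_max_right 0 h) (by positivity)

lemma continuous_posPow : Continuous (posPow k) :=
  (continuous_id.max continuous_const).rpow_const fun _ => Or.inr (by positivity)

end posPow

lemma le_pi_sq_mul_sq {μ : ℝ} {n : ℕ} (hn : ⌈μ⌉₊ ≤ n) : μ ≤ π ^ 2 * n ^ 2 := by
  have hn' : (n : ℝ) ≤ n ^ 2 := by exact_mod_cast Nat.le_self_pow two_ne_zero n
  have hπ : 1 ≤ π ^ 2 := one_le_pow₀ (by linarith [pi_gt_three])
  calc μ ≤ n := (Nat.le_ceil μ).trans (by exact_mod_cast hn)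
    _ ≤ n ^ 2 := hn'
    _ ≤ π ^ 2 * n ^ 2 := le_mul_of_one_le_left (by positivity) hπ

lemma summable_comp_sub_pi_sq_mul_sq {g : ℝ → ℝ} (hg : ∀ ν ≤ 0, g ν = 0) (μ : ℝ) :
    Summable fun n : ℕ => g (μ - π ^ 2 * n ^ 2) :=
  summable_of_ne_finset_zero (s := Finset.range ⌈μ⌉₊) fun _ hn =>
    hg _ (sub_nonpos.2 (le_pi_sq_mul_sq (by simpa using hn)))

lemma tsum_succ_le_integral_of_antitoneOn {f : ℝ → ℝ} {T : ℝ} (hT : 0 ≤ T)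
    (hf : AntitoneOn f (Set.Ici 0)) (hzero : ∀ t, T ≤ t → f t = 0) :
    ∑' n : ℕ, f (n + 1) ≤ ∫ t in 0..T, f t := by
  set N := ⌈T⌉₊
  have hTN : T ≤ N := Nat.le_ceil T
  have hint : ∀ a b, 0 ≤ a → 0 ≤ b → IntervalIntegrable f volume a b :=
    fun a b ha hb => (hf.mono fun x hx => le_min ha hb |>.trans hx.1).intervalIntegrable
  have htail : ∫ t in T..N, f t = 0 := by
    rw [intervalIntegral.integral_congr (g := 0) fun t ht => hzero t ?_]
    · simp
    · rw [Set.uIcc_of_le hTN] at ht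
      exact ht.1
  calc ∑' n : ℕ, f (n + 1) = ∑ n ∈ Finset.range N, f (0 + ↑(n + 1)) := by
        rw [tsum_eq_sum (s := Finset.range N) fun n hn => hzero _ ?_]
        · simp
        · exact hTN.trans (by exact_mod_cast (not_lt.1 (Finset.mem_range.not.1 hn)).trans n.le_succ)
    _ ≤ ∫ t in 0..0 + N, f t := (hf.mono fun x hx => hx.1).sum_le_integral
    _ = ∫ t in 0..T, f t := by
        rw [zero_add, ← intervalIntegral.integral_add_adjacent_intervals (hint 0 T le_rfl hT)
          (hint T N hT (hT.trans hTN)), htail, add_zero]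

lemma posPow_mul_cos_sq {k : ℕ} {μ x : ℝ} (hμ : 0 ≤ μ) (hx : 0 ≤ cos x) :
    posPow k (μ * cos x ^ 2) = μ ^ (1 + (k : ℝ) / 2) * cos x ^ (k + 2) := by
  rw [posPow_of_nonneg k (by positivity), mul_rpow hμ (by positivity), ← rpow_natCast_mul hx,
    show ((2 : ℕ) : ℝ) * (1 + k / 2) = ((k + 2 : ℕ) : ℝ) by push_cast; ring, rpow_natCast]

lemma integral_posPow_sub_pi_sq_mul_sq (k : ℕ) {μ : ℝ} (hμ : 0 < μ) :
    ∫ t in 0..√μ / π, posPow k (μ - π ^ 2 * t ^ 2) =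
      (∫ x in 0..π / 2, cos x ^ (k + 3)) / π * posPow (k + 1) μ := by
  set r := √μ / π with hr_def
  have hr : π ^ 2 * r ^ 2 = μ := by
    rw [div_pow, sq_sqrt hμ.le]; field_simp
  have hsub := intervalIntegral.integral_comp_mul_deriv (a := 0) (b := π / 2)
    (f := fun x => r * sin x) (f' := fun x => r * cos x)
    (g := fun t => posPow k (μ - π ^ 2 * t ^ 2))
    (fun x _ => (hasDerivAt_sin x).const_mul r) (by fun_prop)
    ((continuous_posPow k).comp (by fun_prop))
  simp only [Function.comp_apply, sin_zero, mul_zero, sin_pi_div_two, mul_one] at hsub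
  rw [← hsub, intervalIntegral.integral_congr
    (g := fun x => μ ^ (1 + (k : ℝ) / 2) * r * cos x ^ (k + 3))]
  · rw [intervalIntegral.integral_const_mul, posPow_of_nonneg _ hμ.le, hr_def, sqrt_eq_rpow,
      show 1 + ((k + 1 : ℕ) : ℝ) / 2 = (1 + k / 2) + 1 / 2 by push_cast; ring,
      rpow_add hμ (1 + (k : ℝ) / 2) (1 / 2)]
    ring
  · intro x hx
    rw [Set.uIcc_of_le (by positivity)] at hx
    have hcos : 0 ≤ cos x := cos_nonneg_of_mem_Icc ⟨by linarith [hx.1, pi_pos], hx.2⟩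
    have : μ - π ^ 2 * (r * sin x) ^ 2 = μ * cos x ^ 2 := by
      rw [mul_pow, ← mul_assoc, hr, cos_sq']; ring
    simp only
    rw [this, posPow_mul_cos_sq hμ.le hcos]
    ring

lemma tsum_posPow_sub_pi_sq_mul_sq_le (k : ℕ) (μ : ℝ) :
    ∑' n : ℕ, posPow k (μ - π ^ 2 * n ^ 2) ≤
      posPow k μ + (∫ x in 0..π / 2, cos x ^ (k + 3)) / π * posPow (k + 1) μ := by
  rcases le_or_gt μ 0 with hμ | hμ
  · have : ∀ n : ℕ, posPow k (μ - π ^ 2 * n ^ 2) = 0 := fun n =>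
      posPow_of_nonpos k (by nlinarith [sq_nonneg (π * n)])
    simp [this, posPow_of_nonpos _ hμ]
  have hT : π ^ 2 * (√μ / π) ^ 2 = μ := by
    rw [div_pow, sq_sqrt hμ.le]; field_simp
  have hanti : AntitoneOn (fun t => posPow k (μ - π ^ 2 * t ^ 2)) (Set.Ici 0) :=
    fun s hs t _ hst => monotone_posPow k (by gcongr)
  have hzero : ∀ t, √μ / π ≤ t → posPow k (μ - π ^ 2 * t ^ 2) = 0 := fun t ht =>
    posPow_of_nonpos k (by rw [sub_nonpos, ← hT]; gcongr)
  rw [(summable_comp_sub_pi_sq_mul_sq (fun ν hν => posPow_of_nonpos k hν) μ).tsum_eq_zero_add,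
    ← integral_posPow_sub_pi_sq_mul_sq k hμ]
  push_cast
  simpa using tsum_succ_le_integral_of_antitoneOn (by positivity) hanti hzero

lemma tsum_posPow_sub_pi_sq_mul_sq_le_add (k : ℕ) (μ : ℝ) :
    ∑' n : ℕ, posPow k (μ - π ^ 2 * n ^ 2) ≤ posPow k μ + posPow (k + 1) μ := by
  have hc : (∫ x in 0..π / 2, cos x ^ (k + 3)) / π ≤ 1 := by
    rw [div_le_one pi_pos]; linarith [integral_cos_pow_le (k + 3), pi_pos]
  have := mul_le_mul_of_nonneg_right hc (posPow_nonneg (k + 1) (ν := μ))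
  linarith [tsum_posPow_sub_pi_sq_mul_sq_le k μ]

-- The Neumann eigenvalues of the Laplacian on the unit cube `[0, 1]^d` are `π² |p|²`, `p ∈ ℕ^d`.
noncomputable def neumannSum (d : ℕ) (μ : ℝ) : ℝ :=
  ∑' p : Fin d → ℕ, min (π ^ 2 * ∑ i, (p i : ℝ) ^ 2 - μ) 0

lemma neumannSum_of_nonpos (d : ℕ) {μ : ℝ} (hμ : μ ≤ 0) : neumannSum d μ = 0 := by
  have : ∀ p : Fin d → ℕ, min (π ^ 2 * ∑ i, (p i : ℝ) ^ 2 - μ) 0 = 0 := fun p =>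
    min_eq_right (sub_nonneg.2 (hμ.trans (by positivity)))
  simp [neumannSum, this]

lemma summable_neumannSum_term (d : ℕ) (μ : ℝ) :
    Summable fun p : Fin d → ℕ => min (π ^ 2 * ∑ i, (p i : ℝ) ^ 2 - μ) 0 := by
  refine summable_of_ne_finset_zero (s := Fintype.piFinset fun _ => Finset.range ⌈μ⌉₊)
    fun p hp => min_eq_right (sub_nonneg.2 ?_)
  obtain ⟨i, hi⟩ : ∃ i, ⌈μ⌉₊ ≤ p i := by simpa using hp
  calc μ ≤ π ^ 2 * (p i : ℝ) ^ 2 := le_pi_sq_mul_sq hi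
    _ ≤ π ^ 2 * ∑ j, (p j : ℝ) ^ 2 := by
      gcongr
      exact Finset.single_le_sum (fun j _ => sq_nonneg (p j : ℝ)) (Finset.mem_univ i)

lemma neumannSum_zero (μ : ℝ) : neumannSum 0 μ = min (-μ) 0 := by
  simp [neumannSum]

lemma neumannSum_succ (d : ℕ) (μ : ℝ) :
    neumannSum (d + 1) μ = ∑' n : ℕ, neumannSum d (μ - π ^ 2 * n ^ 2) := by
  let e := Fin.consEquiv fun _ : Fin (d + 1) => ℕ
  have hterm : ∀ (n : ℕ) (q : Fin d → ℕ),
      min (π ^ 2 * ∑ i, (e (n, q) i : ℝ) ^ 2 - μ) 0 =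
        min (π ^ 2 * ∑ i, (q i : ℝ) ^ 2 - (μ - π ^ 2 * n ^ 2)) 0 := by
    intro n q
    simp only [e, Fin.consEquiv_apply, Fin.sum_univ_succ, Fin.cons_zero, Fin.cons_succ]
    ring_nf
  have hsum : Summable fun c => min (π ^ 2 * ∑ i, (e c i : ℝ) ^ 2 - μ) 0 :=
    (e.summable_iff).2 (summable_neumannSum_term (d + 1) μ)
  rw [neumannSum, ← e.tsum_eq, Summable.tsum_prod' hsum
    fun n => by simpa only [Function.comp_apply, hterm] using summable_neumannSum_term d _]
  simp only [hterm, neumannSum]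

lemma le_neumannSum_succ {d : ℕ} {C : ℝ} (hC : 0 ≤ C)
    (h : ∀ ν, -(Lcl d * posPow d ν + C * ∑ k ∈ Finset.range d, posPow k ν) ≤ neumannSum d ν)
    (μ : ℝ) :
    -(Lcl (d + 1) * posPow (d + 1) μ +
        (Lcl d + 2 * C) * ∑ k ∈ Finset.range (d + 1), posPow k μ) ≤ neumannSum (d + 1) μ := by
  set Φ : ℕ → ℝ := fun k => ∑' n : ℕ, posPow k (μ - π ^ 2 * n ^ 2)
  have hΦ : ∀ k, Summable fun n : ℕ => posPow k (μ - π ^ 2 * n ^ 2) := fun k =>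
    summable_comp_sub_pi_sq_mul_sq (fun _ => posPow_of_nonpos k) μ
  have hlower : -(Lcl d * Φ d + C * ∑ k ∈ Finset.range d, Φ k) ≤ neumannSum (d + 1) μ := by
    have h1 := (hΦ d).mul_left (Lcl d)
    have h2 := (summable_sum (s := Finset.range d) fun k _ => hΦ k).mul_left C
    rw [neumannSum_succ, ← tsum_mul_left, ← Summable.tsum_finsetSum fun k _ => hΦ k,
      ← tsum_mul_left, ← h1.tsum_add h2, ← tsum_neg]
    exact (h1.add h2).neg.tsum_le_tsum (fun n => h _)
      (summable_comp_sub_pi_sq_mul_sq (fun _ => neumannSum_of_nonpos d) μ)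
  have hmain : Lcl d * Φ d ≤ Lcl d * posPow d μ + Lcl (d + 1) * posPow (d + 1) μ := by
    rw [Lcl_succ, mul_div_assoc, mul_assoc, ← mul_add]
    exact mul_le_mul_of_nonneg_left (tsum_posPow_sub_pi_sq_mul_sq_le d μ) (Lcl_nonneg d)
  have herr : ∑ k ∈ Finset.range d, Φ k ≤ 2 * ∑ k ∈ Finset.range (d + 1), posPow k μ := by
    have h1 := Finset.sum_range_succ (fun k => posPow k μ) d
    have h2 := Finset.sum_range_succ' (fun k => posPow k μ) d
    have := posPow_nonneg d (ν := μ)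
    have := posPow_nonneg 0 (ν := μ)
    calc ∑ k ∈ Finset.range d, Φ k
        ≤ ∑ k ∈ Finset.range d, (posPow k μ + posPow (k + 1) μ) :=
          Finset.sum_le_sum fun k _ => tsum_posPow_sub_pi_sq_mul_sq_le_add k μ
      _ ≤ 2 * ∑ k ∈ Finset.range (d + 1), posPow k μ := by
          rw [Finset.sum_add_distrib]; linarith
  have hd : Lcl d * posPow d μ ≤ Lcl d * ∑ k ∈ Finset.range (d + 1), posPow k μ :=
    mul_le_mul_of_nonneg_left (Finset.single_le_sum (fun k _ => posPow_nonneg k)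
      (Finset.self_mem_range_succ d)) (Lcl_nonneg d)
  linarith [mul_le_mul_of_nonneg_left herr hC]

lemma exists_le_neumannSum (d : ℕ) : ∃ C > 0, ∀ μ,
    -(Lcl d * posPow d μ + C * ∑ k ∈ Finset.range d, posPow k μ) ≤ neumannSum d μ := by
  induction d with
  | zero => exact ⟨1, one_pos, fun μ => by simp [Lcl_eq, posPow, neumannSum_zero]⟩
  | succ d ih =>
    obtain ⟨C, hC, h⟩ := ih
    exact ⟨Lcl d + 2 * C, by linarith [Lcl_nonneg d], le_neumannSum_succ hC.le h⟩

theorem neumann_sum_lower_bound_general (d : ℕ) :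
    ∃ C : ℝ, 0 < C ∧ ∀ μ : ℝ, 0 < μ →
      -(Lcl d) * μ ^ (1 + (d : ℝ) / 2) - C * ∑ k ∈ Finset.range d, μ ^ (1 + (k : ℝ) / 2) ≤
        ∑' p : Fin d → ℕ, min (Real.pi ^ 2 * ∑ i, ((p i : ℝ)) ^ 2 - μ) 0 := by
  obtain ⟨C, hC, h⟩ := exists_le_neumannSum d
  refine ⟨C, hC, fun μ hμ => ?_⟩
  have hμC := h μ
  simp only [posPow_of_nonneg _ hμ.le] at hμC
  exact le_of_eq_of_le (by ring) hμC

/-- Lower bound on the Neumann eigenvalue sum on the unit cube: semiclassical main term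
plus lower-order error terms. -/
theorem neumann_sum_lower_bound (d : ℕ) (hd : 1 ≤ d) :
    ∃ C : ℝ, 0 < C ∧ ∀ μ : ℝ, 0 < μ →
      -(Lcl d) * μ ^ (1 + (d : ℝ) / 2) - C * ∑ k ∈ Finset.range d, μ ^ (1 + (k : ℝ) / 2) ≤
        ∑' p : Fin d → ℕ, min (Real.pi ^ 2 * ∑ i, ((p i : ℝ)) ^ 2 - μ) 0 :=
  neumann_sum_lower_bound_general d
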